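/- Let d and r₂ be positive integers with r₂ ≥ 1 and k ∈ ℤ_{++}^{r₂} (with k_{r₂+1} := 0). Then the following identity of rational functions of λ holds (equivalently, the polynomial identity obtained by cross-multiplying denominators): [∏_{a=1}^{r₂}(λ − d(a−1)/2)_{2k_{r₂}}] · C₁^{d,d/2}(λ, (k₁,…,k_{r₂})) = C₁^{d,d/2}(λ + 2k_{r₂}, (k₁−k_{r₂}, …, k_{r₂−1}−k_{r₂})) · ∏_{i=1}^{r₂}(λ + k_i − d(r₂+i−2)/4)_{k_{r₂}}, where on the right-hand side C₁^{d,d/2} is formed for the (r₂−1)-tuple (k₁−k_{r₂},…,k_{r₂−1}−k_{r₂}) ∈ ℤ_{++}^{r₂−1}. -/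

import Mathlib

/-!
Write `f(i,j) = d(i+j-2)/4`, so that the diagonal shifts are `d(a-1)/2 = f(a,a)` and the shifts
with `i+j-3` are `f(i,j-1)`. Splitting `(x)_{k_i+k_j} = (x)_{2k_{r₂}} (x+2k_{r₂})_{k_i+k_j-2k_{r₂}}`
(`k` is decreasing, so the subtraction does not truncate), merging
`(x)_{k_i} (x+k_i)_{k_{r₂}} = (x)_{k_i+k_{r₂}}`, using `k_{r₂+1} = 0` in the column `j = r₂+1`,
and shifting `j ↦ j-1` in the pairs with offset `f(i,j-1)`, both sides become the same product.
Only this bookkeeping is used, so the recursion holds for an arbitrary offset table `f`.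
-/

open Polynomial Finset

/-- `(p)_m := ∏_{t=0}^{m−1}(p + t)` for a polynomial `p ∈ ℂ[X]`. -/
noncomputable def pochOf (p : Polynomial ℂ) (m : ℕ) : Polynomial ℂ :=
  ∏ t ∈ Finset.range m, (p + (t : Polynomial ℂ))

lemma pochOf_add (p : ℂ[X]) (a b : ℕ) :
    pochOf p (a + b) = pochOf p a * pochOf (p + C (a : ℂ)) b := by
  unfold pochOf
  rw [prod_range_add]
  congr 1
  refine prod_congr rfl fun t _ => ?_
  push_cast [C_eq_natCast]
  ring

lemma pochOf_X_add_C_add (c : ℂ) (a b : ℕ) :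
    pochOf (X + C c) (a + b) = pochOf (X + C c) a * pochOf (X + C (c + a)) b := by
  rw [pochOf_add, C_add, add_assoc]

lemma pochOf_X_add_C_eq_mul_of_le (c : ℂ) {n m : ℕ} (h : n ≤ m) :
    pochOf (X + C c) m = pochOf (X + C c) n * pochOf (X + C (c + n)) (m - n) := by
  rw [← pochOf_X_add_C_add, Nat.add_sub_cancel' h]

lemma pochOf_X_sub_C (c : ℂ) (n : ℕ) : pochOf (X - C c) n = pochOf (X + C (-c)) n := by
  rw [C_neg, ← sub_eq_add_neg]

section PairProducts

variable {M : Type*} [CommMonoid M]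

lemma prod_pairs_succ (g : ℕ → ℕ → M) (s : ℕ) :
    ∏ i ∈ Icc 1 (s + 1), ∏ j ∈ Icc (i + 1) (s + 1), g i j =
      (∏ i ∈ Icc 1 s, ∏ j ∈ Icc (i + 1) s, g i j) * ∏ i ∈ Icc 1 s, g i (s + 1) := by
  rw [prod_Icc_succ_top (by omega), Icc_eq_empty_of_lt (lt_add_one (s + 1)), prod_empty, mul_one,
    ← prod_mul_distrib]
  refine prod_congr rfl fun i hi => ?_
  rw [prod_Icc_succ_top (by grind)]

lemma prod_pairs_succ_eq_diag_mul (g : ℕ → ℕ → M) (s : ℕ) :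
    ∏ i ∈ Icc 1 (s + 1), ∏ j ∈ Icc (i + 1) (s + 1), g i j =
      (∏ i ∈ Icc 1 s, g i (i + 1)) * ∏ i ∈ Icc 1 s, ∏ j ∈ Icc (i + 1) s, g i (j + 1) := by
  rw [prod_Icc_succ_top (by omega), Icc_eq_empty_of_lt (lt_add_one (s + 1)), prod_empty, mul_one,
    ← prod_mul_distrib]
  refine prod_congr rfl fun i hi => ?_
  rw [← map_add_right_Icc, prod_map, ← insert_Icc_add_one_left_eq_Icc (by grind),
    prod_insert (by simp)]
  rfl

end PairProducts

lemma prod_pairs_pochOf_eq_mul_of_le (c : ℕ → ℕ → ℂ) (m : ℕ → ℕ → ℕ) (n s : ℕ)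
    (h : ∀ i ∈ Icc 1 s, ∀ j ∈ Icc (i + 1) s, n ≤ m i j) :
    ∏ i ∈ Icc 1 s, ∏ j ∈ Icc (i + 1) s, pochOf (X + C (c i j)) (m i j) =
      (∏ i ∈ Icc 1 s, ∏ j ∈ Icc (i + 1) s, pochOf (X + C (c i j)) n) *
        ∏ i ∈ Icc 1 s, ∏ j ∈ Icc (i + 1) s, pochOf (X + C (n + c i j)) (m i j - n) := by
  simp_rw [← prod_mul_distrib]
  refine prod_congr rfl fun i hi => prod_congr rfl fun j hj => ?_
  rw [pochOf_X_add_C_eq_mul_of_le _ (h i hi j hj), add_comm (c i j)]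

section PairRecursion

variable (f : ℂ → ℂ → ℂ) (k : ℕ → ℕ) (s : ℕ)

lemma two_mul_le_add_of_forall_le (hk : ∀ i, 1 ≤ i → i ≤ s + 1 → k (s + 1) ≤ k i) {t : ℕ}
    (ht : t ≤ s + 1) : ∀ i ∈ Icc 1 t, ∀ j ∈ Icc (i + 1) t, 2 * k (s + 1) ≤ k i + k j := by
  intro i hi j hj
  simp only [mem_Icc] at hi hj
  have := hk i hi.1 (by omega)
  have := hk j (by omega) (by omega)
  omega

lemma prod_pairs_pochOf_succ (hk : ∀ i, 1 ≤ i → i ≤ s + 1 → k (s + 1) ≤ k i) :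
    ∏ i ∈ Icc 1 (s + 1), ∏ j ∈ Icc (i + 1) (s + 1), pochOf (X + C (-f i j)) (k i + k j) =
      (∏ i ∈ Icc 1 s, ∏ j ∈ Icc (i + 1) s, pochOf (X + C (-f i j)) (2 * k (s + 1))) *
      (∏ i ∈ Icc 1 s, ∏ j ∈ Icc (i + 1) s,
        pochOf (X + C (2 * k (s + 1) - f i j)) (k i + k j - 2 * k (s + 1))) *
      ∏ i ∈ Icc 1 s, pochOf (X + C (-f i (s + 1 : ℕ))) (k i + k (s + 1)) := by
  rw [prod_pairs_succ, prod_pairs_pochOf_eq_mul_of_le _ _ (2 * k (s + 1)) _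
    (two_mul_le_add_of_forall_le k s hk (by omega))]
  simp only [Nat.cast_mul, Nat.cast_ofNat, ← sub_eq_add_neg]

lemma prod_pairs_pochOf_shift (hk : ∀ i, 1 ≤ i → i ≤ s + 1 → k (s + 1) ≤ k i)
    (hk0 : k (s + 1 + 1) = 0) :
    ∏ i ∈ Icc 1 (s + 1 + 1), ∏ j ∈ Icc (i + 1) (s + 1 + 1),
        pochOf (X + C (-f i (j - 1))) (k i + k j) =
      (∏ a ∈ Icc 1 s, pochOf (X + C (-f a a)) (2 * k (s + 1))) *
      (∏ i ∈ Icc 1 s, ∏ j ∈ Icc (i + 1) s, pochOf (X + C (-f i j)) (2 * k (s + 1))) *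
      (∏ i ∈ Icc 1 (s + 1), ∏ j ∈ Icc (i + 1) (s + 1),
        pochOf (X + C (2 * k (s + 1) - f i (j - 1))) (k i + k j - 2 * k (s + 1))) *
      ∏ i ∈ Icc 1 (s + 1), pochOf (X + C (-f i (s + 1 : ℕ))) (k i) := by
  rw [prod_pairs_succ, hk0, prod_pairs_pochOf_eq_mul_of_le _ _ (2 * k (s + 1))
    _ (two_mul_le_add_of_forall_le k s hk le_rfl), prod_pairs_succ_eq_diag_mul]
  simp only [Nat.cast_mul, Nat.cast_ofNat, ← sub_eq_add_neg, Nat.cast_add_one,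
    add_sub_cancel_right, add_zero]

lemma prod_pochOf_mul_prod_pochOf :
    (∏ i ∈ Icc 1 (s + 1), pochOf (X + C (k i - f i (s + 1 : ℕ))) (k (s + 1))) *
      ∏ i ∈ Icc 1 (s + 1), pochOf (X + C (-f i (s + 1 : ℕ))) (k i) =
    (∏ i ∈ Icc 1 s, pochOf (X + C (-f i (s + 1 : ℕ))) (k i + k (s + 1))) *
      pochOf (X + C (-f (s + 1 : ℕ) (s + 1 : ℕ))) (2 * k (s + 1)) := by
  rw [← prod_mul_distrib, two_mul, ← prod_Icc_succ_top (by omega)]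
  refine prod_congr rfl fun i _ => ?_
  rw [mul_comm, pochOf_X_add_C_add, neg_add_eq_sub]

theorem prod_pairs_pochOf_recursion (hk : ∀ i, 1 ≤ i → i ≤ s + 1 → k (s + 1) ≤ k i)
    (hk0 : k (s + 1 + 1) = 0) :
    (∏ a ∈ Icc 1 (s + 1), pochOf (X + C (-f a a)) (2 * k (s + 1))) *
      (∏ i ∈ Icc 1 (s + 1), ∏ j ∈ Icc (i + 1) (s + 1), pochOf (X + C (-f i j)) (k i + k j)) *
      (∏ i ∈ Icc 1 (s + 1), ∏ j ∈ Icc (i + 1) (s + 1),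
        pochOf (X + C (2 * k (s + 1) - f i (j - 1))) (k i + k j - 2 * k (s + 1))) =
    (∏ i ∈ Icc 1 s, ∏ j ∈ Icc (i + 1) s,
        pochOf (X + C (2 * k (s + 1) - f i j)) (k i + k j - 2 * k (s + 1))) *
      (∏ i ∈ Icc 1 (s + 1), pochOf (X + C (k i - f i (s + 1 : ℕ))) (k (s + 1))) *
      ∏ i ∈ Icc 1 (s + 1 + 1), ∏ j ∈ Icc (i + 1) (s + 1 + 1),
        pochOf (X + C (-f i (j - 1))) (k i + k j) := by
  rw [prod_pairs_pochOf_shift f k s hk hk0, mul_mul_mul_comm _ _ _ (∏ i ∈ Icc 1 (s + 1), _),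
    prod_pochOf_mul_prod_pochOf, prod_pairs_pochOf_succ f k s hk,
    prod_Icc_succ_top (by omega) fun a => pochOf (X + C (-f a a)) (2 * k (s + 1))]
  ring

end PairRecursion

theorem simple_const_recursion_general (d r₂ : ℕ) (hr₂ : 1 ≤ r₂)
    (k : ℕ → ℕ) (hk : ∀ i j, 1 ≤ i → i ≤ j → j ≤ r₂ → k j ≤ k i)
    (hk0 : k (r₂ + 1) = 0) :
    (∏ a ∈ Finset.Icc 1 r₂,
        pochOf (Polynomial.X -
          Polynomial.C ((d : ℂ) * ((a : ℂ) - 1) / 2)) (2 * k r₂)) *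
      (∏ i ∈ Finset.Icc 1 r₂, ∏ j ∈ Finset.Icc (i + 1) r₂,
        pochOf (Polynomial.X -
          Polynomial.C ((d : ℂ) * ((i : ℂ) + (j : ℂ) - 2) / 4)) (k i + k j)) *
      (∏ i ∈ Finset.Icc 1 r₂, ∏ j ∈ Finset.Icc (i + 1) r₂,
        pochOf (Polynomial.X +
          Polynomial.C (2 * (k r₂ : ℂ) - (d : ℂ) * ((i : ℂ) + (j : ℂ) - 3) / 4))
          (k i + k j - 2 * k r₂)) =
    (∏ i ∈ Finset.Icc 1 (r₂ - 1), ∏ j ∈ Finset.Icc (i + 1) (r₂ - 1),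
        pochOf (Polynomial.X +
          Polynomial.C (2 * (k r₂ : ℂ) - (d : ℂ) * ((i : ℂ) + (j : ℂ) - 2) / 4))
          (k i + k j - 2 * k r₂)) *
      (∏ i ∈ Finset.Icc 1 r₂,
        pochOf (Polynomial.X +
          Polynomial.C ((k i : ℂ) - (d : ℂ) * ((r₂ : ℂ) + (i : ℂ) - 2) / 4)) (k r₂)) *
      (∏ i ∈ Finset.Icc 1 (r₂ + 1), ∏ j ∈ Finset.Icc (i + 1) (r₂ + 1),
        pochOf (Polynomial.X -
          Polynomial.C ((d : ℂ) * ((i : ℂ) + (j : ℂ) - 3) / 4)) (k i + k j)) := by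
  obtain ⟨s, rfl⟩ : ∃ s, r₂ = s + 1 := ⟨r₂ - 1, by omega⟩
  simp only [pochOf_X_sub_C, Nat.add_sub_cancel]
  convert prod_pairs_pochOf_recursion (fun x y => (d : ℂ) * (x + y - 2) / 4) k s
    (fun i h1 h2 => hk i (s + 1) h1 h2 le_rfl) hk0 using 7 <;> ring

/-- The inductive step (rank `r₂` to rank `r₂−1`) of Theorem 6.1 (case ε₂=1, d₂=d/2):
`[∏_{a=1}^{r₂}(λ−d(a−1)/2)_{2k_{r₂}}]·C₁^{d,d/2}(λ,(k₁,…,k_{r₂}))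
  = C₁^{d,d/2}(λ+2k_{r₂},(k₁−k_{r₂},…,k_{r₂−1}−k_{r₂}))·∏_{i=1}^{r₂}(λ+k_i−d(r₂+i−2)/4)_{k_{r₂}}`,
stated as the polynomial identity obtained by cross-multiplying denominators. -/
theorem simple_const_recursion (d r₂ : ℕ) (hd : 0 < d) (hr₂ : 1 ≤ r₂)
    (k : ℕ → ℕ) (hk : ∀ i j, 1 ≤ i → i ≤ j → j ≤ r₂ → k j ≤ k i)
    (hk0 : k (r₂ + 1) = 0) :
    (∏ a ∈ Finset.Icc 1 r₂,
        pochOf (Polynomial.X -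
          Polynomial.C ((d : ℂ) * ((a : ℂ) - 1) / 2)) (2 * k r₂)) *
      (∏ i ∈ Finset.Icc 1 r₂, ∏ j ∈ Finset.Icc (i + 1) r₂,
        pochOf (Polynomial.X -
          Polynomial.C ((d : ℂ) * ((i : ℂ) + (j : ℂ) - 2) / 4)) (k i + k j)) *
      (∏ i ∈ Finset.Icc 1 r₂, ∏ j ∈ Finset.Icc (i + 1) r₂,
        pochOf (Polynomial.X +
          Polynomial.C (2 * (k r₂ : ℂ) - (d : ℂ) * ((i : ℂ) + (j : ℂ) - 3) / 4))
          (k i + k j - 2 * k r₂)) =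
    (∏ i ∈ Finset.Icc 1 (r₂ - 1), ∏ j ∈ Finset.Icc (i + 1) (r₂ - 1),
        pochOf (Polynomial.X +
          Polynomial.C (2 * (k r₂ : ℂ) - (d : ℂ) * ((i : ℂ) + (j : ℂ) - 2) / 4))
          (k i + k j - 2 * k r₂)) *
      (∏ i ∈ Finset.Icc 1 r₂,
        pochOf (Polynomial.X +
          Polynomial.C ((k i : ℂ) - (d : ℂ) * ((r₂ : ℂ) + (i : ℂ) - 2) / 4)) (k r₂)) *
      (∏ i ∈ Finset.Icc 1 (r₂ + 1), ∏ j ∈ Finset.Icc (i + 1) (r₂ + 1),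
        pochOf (Polynomial.X -
          Polynomial.C ((d : ℂ) * ((i : ℂ) + (j : ℂ) - 3) / 4)) (k i + k j)) :=
  simple_const_recursion_general d r₂ hr₂ k hk hk0
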